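/- In a prelinked Grassmannian $\mathrm{LG}(r, E_\bullet)$ over a scheme $S$, the simple points form an open subset. Concretely: if a point $(F_v)_v$ over a field-valued point of $S$ is simple with witnessing data $(v_i, s_i)_{i=1}^r$, then for any family $(\mathcal{F}_v)_v$ over a local ring specializing to $(F_v)_v$, any lifts $\tilde{s}_i \in \mathcal{F}_{v_i}$ of the $s_i$ again have the property that for every vertex $v$, the images $f_{P^{v_i}}(\tilde{s}_i)$ form a basis of $\mathcal{F}_v$. -/

import Mathlib

/-- `IsPathTo src tgt u v l`: the list of edges `l` forms a directed path from
`u` to `v` in the directed graph with edge set `Edg`, sources `src`, targets `tgt`. -/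
def IsPathTo {Vtx Edg : Type*} (src tgt : Edg → Vtx) : Vtx → Vtx → List Edg → Prop
  | u, v, [] => u = v
  | u, v, e :: l => src e = u ∧ IsPathTo src tgt (tgt e) v l

/-- The composite `f_P = f_{e_n} ∘ ⋯ ∘ f_{e_1}` of the matrices along a path. -/
def pathProd {Edg : Type*} {A : Type*} [CommRing A] {d : ℕ}
    (f : Edg → Matrix (Fin d) (Fin d) A) (l : List Edg) : Matrix (Fin d) (Fin d) A :=
  l.foldl (fun acc e => f e * acc) 1

/-- The prelinked Grassmannian compatibility condition: for any two paths `P, P'`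
with the same tail and head there are scalars `s, s'` with `s • f_P = s' • f_{P'}`,
invertible when the corresponding other path is minimal. -/
def Prelinked {Vtx Edg : Type*} (src tgt : Edg → Vtx) {A : Type*} [CommRing A]
    {d : ℕ} (f : Edg → Matrix (Fin d) (Fin d) A) : Prop :=
  ∀ (u v : Vtx) (l l' : List Edg), IsPathTo src tgt u v l → IsPathTo src tgt u v l' →
    ∃ s s' : A, s • pathProd f l = s' • pathProd f l' ∧
      ((∀ l'' : List Edg, IsPathTo src tgt u v l'' → l.length ≤ l''.length) → IsUnit s') ∧
      ((∀ l'' : List Edg, IsPathTo src tgt u v l'' → l'.length ≤ l''.length) → IsUnit s)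

/-- Reduction of a submodule of `R^d` along a ring map `g : R →+* S`: the
`S`-span of the image. -/
def redSub {R S : Type*} [CommRing R] [CommRing S] (g : R →+* S) {d : ℕ}
    (N : Submodule R (Fin d → R)) : Submodule S (Fin d → S) :=
  Submodule.span S ((fun x i => g (x i)) '' (N : Set (Fin d → R)))

/-!
The path images `u_i` of the lifts lie in `𝓕_v` and reduce modulo `ker ρ` to the basis of `F_v`
given by simplicity. Linear independence: a left inverse of the reduced family lifts to a
matrix `B` with `B * u` reducing to the identity, so `B * u` is invertible because `ρ` is a
local homomorphism. Spanning: `𝓕_v` is a direct summand of `A^d`, so it meets `𝔪 A^d` in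
`𝔪 𝓕_v`, hence `𝓕_v ≤ span u + 𝔪 𝓕_v`, and Nakayama's lemma applies.
-/

open scoped Matrix

namespace Matrix

variable {m n : Type*} [Fintype m] [Fintype n] [DecidableEq n]

theorem exists_mul_eq_one_of_linearIndependent_col {K : Type*} [Field K] {M : Matrix m n K}
    (h : LinearIndependent K M.col) : ∃ B : Matrix n m K, B * M = 1 := by
  classical
  obtain ⟨g, hg⟩ := (toLin' M).exists_leftInverse_of_injective
    (LinearMap.ker_eq_bot.mpr (mulVec_injective_iff.mpr h))
  refine ⟨LinearMap.toMatrix' g, ?_⟩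
  rw [← LinearMap.toMatrix'_toLin' M, ← LinearMap.toMatrix'_comp, hg, LinearMap.toMatrix'_id]

theorem linearIndependent_col_of_mul_eq_one {R : Type*} [CommRing R] {M : Matrix m n R}
    {B : Matrix n m R} (h : B * M = 1) : LinearIndependent R M.col :=
  mulVec_injective_iff.mp <| Function.LeftInverse.injective (g := (B *ᵥ ·)) fun x => by
    simp only [mulVec_mulVec, h, one_mulVec]

theorem linearIndependent_col_of_linearIndependent_col_map {A K : Type*} [CommRing A] [Field K]
    (ρ : A →+* K) (hρ : Function.Surjective ρ) [IsLocalHom ρ] {M : Matrix m n A}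
    (h : LinearIndependent K (M.map ρ).col) : LinearIndependent A M.col := by
  obtain ⟨B, hB⟩ := exists_mul_eq_one_of_linearIndependent_col h
  obtain ⟨B', rfl⟩ : ∃ B' : Matrix n m A, B'.map ρ = B :=
    ⟨B.map (Function.surjInv hρ), by rw [map_map, Function.comp_surjInv, map_id]⟩
  have hdet : IsUnit (B' * M).det := by
    refine IsUnit.of_map ρ _ ?_
    rw [RingHom.map_det, RingHom.mapMatrix_apply, Matrix.map_mul, hB, det_one]
    exact isUnit_one
  have hinv : ((B' * M)⁻¹ * B') * M = 1 := by rw [Matrix.mul_assoc, nonsing_inv_mul _ hdet]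
  exact linearIndependent_col_of_mul_eq_one hinv

end Matrix

namespace Submodule

theorem mem_ideal_smul_top_of_forall_mem {A ι : Type*} [CommRing A] [Finite ι] {I : Ideal A}
    {x : ι → A} (hx : ∀ j, x j ∈ I) : x ∈ I • (⊤ : Submodule A (ι → A)) := by
  cases nonempty_fintype ι
  classical
  rw [pi_eq_sum_univ x]
  exact sum_mem fun j _ => smul_mem_smul (hx j) trivial

theorem inf_ideal_smul_top_le_of_isCompl {R M : Type*} [CommRing R] [AddCommGroup M]
    [Module R M] {N c : Submodule R M} (h : IsCompl N c) (I : Ideal R) :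
    N ⊓ I • ⊤ ≤ I • N := by
  rintro x ⟨hxN, hxI⟩
  have hx : x ∈ (I • ⊤ : Submodule R M).map (N.projection c h) :=
    ⟨x, hxI, projection_apply_of_mem_left h hxN⟩
  rwa [map_smul'', map_top, range_projection] at hx

end Submodule

section PathProd

variable {Vtx Edg A : Type*} [CommRing A] {d : ℕ}

theorem foldl_mul_eq_pathProd_mul (f : Edg → Matrix (Fin d) (Fin d) A) (l : List Edg)
    (M : Matrix (Fin d) (Fin d) A) :
    l.foldl (fun acc e => f e * acc) M = pathProd f l * M := by
  induction l generalizing M with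
  | nil => simp only [List.foldl_nil, pathProd, one_mul]
  | cons e l ih =>
    rw [List.foldl_cons, ih, show pathProd f (e :: l) = pathProd f l * (f e * 1) from ih _,
      mul_one, mul_assoc]

theorem pathProd_cons (f : Edg → Matrix (Fin d) (Fin d) A) (e : Edg) (l : List Edg) :
    pathProd f (e :: l) = pathProd f l * f e := by
  rw [pathProd, List.foldl_cons, foldl_mul_eq_pathProd_mul, mul_one]

theorem pathProd_map {K : Type*} [CommRing K] (g : K →+* A)
    (f : Edg → Matrix (Fin d) (Fin d) K) (l : List Edg) :
    pathProd (fun e => (f e).map g) l = (pathProd f l).map g := by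
  induction l with
  | nil => exact (Matrix.map_one g g.map_zero g.map_one).symm
  | cons e l ih => rw [pathProd_cons, pathProd_cons, ih, Matrix.map_mul]

theorem mulVec_pathProd_mem {src tgt : Edg → Vtx} {f : Edg → Matrix (Fin d) (Fin d) A}
    {N : Vtx → Submodule A (Fin d → A)}
    (hlink : ∀ e, Submodule.map (f e).mulVecLin (N (src e)) ≤ N (tgt e))
    {u v : Vtx} {l : List Edg} (hl : IsPathTo src tgt u v l)
    {x : Fin d → A} (hx : x ∈ N u) : pathProd f l *ᵥ x ∈ N v := by
  induction l generalizing u x with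
  | nil =>
    obtain rfl : u = v := hl
    simpa [pathProd] using hx
  | cons e l ih =>
    obtain ⟨rfl, hl⟩ := hl
    rw [pathProd_cons, ← Matrix.mulVec_mulVec]
    exact ih hl (hlink e ⟨x, hx, rfl⟩)

end PathProd

theorem span_range_eq_of_redSub_le {A B : Type*} [CommRing A] [CommRing B] {ρ : A →+* B}
    (hρ : Function.Surjective ρ) (hker : RingHom.ker ρ ≤ Ideal.jacobson ⊥) {d : ℕ}
    {N c : Submodule A (Fin d → A)} (hN : IsCompl N c) {ι : Type*} [Fintype ι]
    {u : ι → Fin d → A} (hu : ∀ i, u i ∈ N)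
    (hred : redSub ρ N ≤ Submodule.span B (Set.range fun i j => ρ (u i j))) :
    Submodule.span A (Set.range u) = N := by
  refine le_antisymm (Submodule.span_le.mpr (Set.range_subset_iff.mpr hu)) ?_
  refine Submodule.le_of_le_smul_of_le_jacobson_bot
    (Submodule.CoFG.fg_of_isCompl hN.symm Submodule.CoFG.of_finite) hker fun x hx => ?_
  obtain ⟨a, ha⟩ := (Submodule.mem_span_range_iff_exists_fun B).mp
    (hred (Submodule.subset_span ⟨x, hx, rfl⟩))
  set s := ∑ i, Function.surjInv hρ (a i) • u i
  have hs : s ∈ Submodule.span A (Set.range u) :=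
    Submodule.sum_mem _ fun i _ => Submodule.smul_mem _ _ (Submodule.subset_span ⟨i, rfl⟩)
  have hxs : x - s ∈ N := N.sub_mem hx (N.sum_mem fun i _ => N.smul_mem _ (hu i))
  have hρxs : ∀ j, ρ ((x - s) j) = 0 := fun j => by
    have := congrFun ha j
    simp only [Finset.sum_apply, Pi.smul_apply, smul_eq_mul] at this
    simp [s, Finset.sum_apply, map_sum, Function.surjInv_eq hρ, this]
  -- `x - s` reduces to zero, and `N` is a direct summand
  have hker_smul : x - s ∈ RingHom.ker ρ • N :=
    Submodule.inf_ideal_smul_top_le_of_isCompl hN _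
      ⟨hxs, Submodule.mem_ideal_smul_top_of_forall_mem hρxs⟩
  rw [← add_sub_cancel s x]
  exact Submodule.add_mem_sup hs hker_smul

theorem stmt_14_general (K : Type*) [Field K] (Vtx Edg : Type*)
    (src tgt : Edg → Vtx) (d r : ℕ)
    (f : Edg → Matrix (Fin d) (Fin d) K)
    -- the simple `K`-point `(F_v)`:
    (F : Vtx → Submodule K (Fin d → K))
    (vsel : Fin r → Vtx) (ssel : Fin r → (Fin d → K))
    (P : Vtx → Fin r → List Edg)
    (hP : ∀ v i, IsPathTo src tgt (vsel i) v (P v i))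
    (hsimple : ∀ v : Vtx,
      LinearIndependent K (fun i => (pathProd f (P v i)).mulVec (ssel i)) ∧
      Submodule.span K (Set.range fun i => (pathProd f (P v i)).mulVec (ssel i)) = F v)
    -- a family over a local ring `A` specializing to `(F_v)`:
    (A : Type*) [CommRing A] [IsLocalRing A] [Algebra K A]
    (ρ : A →+* K) (hρ : ∀ x : K, ρ (algebraMap K A x) = x)
    (hρker : RingHom.ker ρ = IsLocalRing.maximalIdeal A)
    (𝓕 : Vtx → Submodule A (Fin d → A))
    (h𝓕sum : ∀ v, ∃ c, IsCompl (𝓕 v) c)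
    (h𝓕link : ∀ e : Edg,
      Submodule.map ((f e).map (algebraMap K A)).mulVecLin (𝓕 (src e)) ≤ 𝓕 (tgt e))
    (h𝓕red : ∀ v, redSub ρ (𝓕 v) = F v)
    -- lifts of the `ssel i`:
    (t : Fin r → (Fin d → A))
    (htmem : ∀ i, t i ∈ 𝓕 (vsel i))
    (htlift : ∀ i, (fun j => ρ (t i j)) = ssel i) :
    ∀ v : Vtx,
      LinearIndependent A
        (fun i => (pathProd (fun e => (f e).map (algebraMap K A)) (P v i)).mulVec (t i)) ∧
      Submodule.span A
        (Set.range fun i =>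
          (pathProd (fun e => (f e).map (algebraMap K A)) (P v i)).mulVec (t i)) = 𝓕 v := by
  intro v
  set u := fun i => pathProd (fun e => (f e).map (algebraMap K A)) (P v i) *ᵥ t i
  have hρsurj : Function.Surjective ρ := fun x => ⟨_, hρ x⟩
  have : IsLocalHom ρ := ⟨fun a ha => by
    by_contra hna
    exact ha.ne_zero (by rwa [← RingHom.mem_ker, hρker, IsLocalRing.mem_maximalIdeal])⟩
  have hred : (fun i j => ρ (u i j)) = fun i => pathProd f (P v i) *ᵥ ssel i := by
    ext i j
    rw [RingHom.map_mulVec, pathProd_map, Matrix.map_map,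
      show ρ ∘ algebraMap K A = id from funext hρ, Matrix.map_id, ← htlift i]
    rfl
  obtain ⟨c, hc⟩ := h𝓕sum v
  refine ⟨Matrix.linearIndependent_col_of_linearIndependent_col_map ρ hρsurj
    (M := Matrix.of fun j i => u i j) ?_, span_range_eq_of_redSub_le hρsurj ?_ hc
    (fun i => mulVec_pathProd_mem h𝓕link (hP v i) (htmem i)) ?_⟩
  · change LinearIndependent K fun i j => ρ (u i j)
    rw [hred]
    exact (hsimple v).1
  · rw [hρker, IsLocalRing.jacobson_eq_maximalIdeal ⊥ bot_ne_top]
  · rw [hred, h𝓕red, (hsimple v).2]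

/-- Proposition `simple-open`: simple points of a prelinked
Grassmannian form an open subset.  Concretely: if a point `(F_v)` over a field
`K` is simple, witnessed by vertices `vsel i`, vectors `ssel i ∈ F (vsel i)` and
paths `P v i` whose images form bases of each `F v`, then for any linked family
`(𝓕_v)` of rank-`r` direct summands over a local ring `A` specializing to
`(F_v)` (along a retraction `ρ : A → K` onto the residue field), any lifts
`t i ∈ 𝓕 (vsel i)` of the `ssel i` again have the property that for every
vertex `v` the path-images of the `t i` generate `𝓕 v` and are linearly
independent, i.e. form a basis of `𝓕 v`. -/
theorem stmt_14 (K : Type*) [Field K] (Vtx Edg : Type*) [Fintype Vtx] [Fintype Edg]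
    (src tgt : Edg → Vtx) (d r : ℕ)
    (f : Edg → Matrix (Fin d) (Fin d) K)
    (hconn : ∀ u v : Vtx, ∃ l : List Edg, IsPathTo src tgt u v l)
    (hpre : Prelinked src tgt f)
    -- the simple `K`-point `(F_v)`:
    (F : Vtx → Submodule K (Fin d → K))
    (hFrank : ∀ v, Module.finrank K (F v) = r)
    (hFlink : ∀ e : Edg, Submodule.map (f e).mulVecLin (F (src e)) ≤ F (tgt e))
    (vsel : Fin r → Vtx) (ssel : Fin r → (Fin d → K))
    (hssel : ∀ i, ssel i ∈ F (vsel i))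
    (P : Vtx → Fin r → List Edg)
    (hP : ∀ v i, IsPathTo src tgt (vsel i) v (P v i))
    (hsimple : ∀ v : Vtx,
      LinearIndependent K (fun i => (pathProd f (P v i)).mulVec (ssel i)) ∧
      Submodule.span K (Set.range fun i => (pathProd f (P v i)).mulVec (ssel i)) = F v)
    -- a family over a local ring `A` specializing to `(F_v)`:
    (A : Type*) [CommRing A] [IsLocalRing A] [Algebra K A]
    (ρ : A →+* K) (hρ : ∀ x : K, ρ (algebraMap K A x) = x)
    (hρker : RingHom.ker ρ = IsLocalRing.maximalIdeal A)
    (𝓕 : Vtx → Submodule A (Fin d → A))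
    (h𝓕sum : ∀ v, ∃ c, IsCompl (𝓕 v) c)
    (h𝓕link : ∀ e : Edg,
      Submodule.map ((f e).map (algebraMap K A)).mulVecLin (𝓕 (src e)) ≤ 𝓕 (tgt e))
    (h𝓕red : ∀ v, redSub ρ (𝓕 v) = F v)
    -- lifts of the `ssel i`:
    (t : Fin r → (Fin d → A))
    (htmem : ∀ i, t i ∈ 𝓕 (vsel i))
    (htlift : ∀ i, (fun j => ρ (t i j)) = ssel i) :
    ∀ v : Vtx,
      LinearIndependent A
        (fun i => (pathProd (fun e => (f e).map (algebraMap K A)) (P v i)).mulVec (t i)) ∧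
      Submodule.span A
        (Set.range fun i =>
          (pathProd (fun e => (f e).map (algebraMap K A)) (P v i)).mulVec (t i)) = 𝓕 v :=
  stmt_14_general K Vtx Edg src tgt d r f F vsel ssel P hP hsimple A ρ hρ hρker 𝓕 h𝓕sum h𝓕link h𝓕red
    t htmem htlift
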